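/- Let Λ₀ be a lattice in ℝᵈ. Then there exists a neighborhood V of the identity in GL_d(ℝ) such that for every g ∈ V, every nonzero vector of minimal Euclidean norm in gΛ₀ is the image under g of a nonzero vector of minimal Euclidean norm in Λ₀. -/

import Mathlib

open Submodule Metric

variable {d : ℕ}

/-- the points of the lattice spanned by the columns of `g` -/
def latticePts (g : Matrix (Fin d) (Fin d) ℝ) : Set (Fin d → ℝ) :=
  {v | ∃ m : Fin d → ℤ, v = g.mulVec fun i => (m i : ℝ)}

/-- the Euclidean norm on `Fin d → ℝ` -/
noncomputable def eNorm (v : Fin d → ℝ) : ℝ := Real.sqrt (∑ i, (v i) ^ 2)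

lemma exists_min_and_gap {E : Type*} [NormedAddCommGroup E] [NormedSpace ℝ E] [ProperSpace E]
    (Λ : Submodule ℤ E) [DiscreteTopology Λ] (x₀ : E) (hx₀ : x₀ ∈ Λ) (hx₀0 : x₀ ≠ 0) :
    ∃ lam c : ℝ, 0 < lam ∧ lam < c ∧ (∃ v ∈ Λ, v ≠ 0 ∧ ‖v‖ = lam) ∧
      (∀ u ∈ Λ, u ≠ 0 → lam ≤ ‖u‖) ∧ (∀ u ∈ Λ, u ≠ 0 → ‖u‖ < c → ‖u‖ = lam) := by
  classical
  haveI hdisc : DiscreteTopology ((Λ : Set E) : Type _) :=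
    inferInstanceAs (DiscreteTopology Λ)
  haveI : DiscreteTopology Λ.toAddSubgroup := inferInstanceAs (DiscreteTopology Λ)
  have hclosed : IsClosed (Λ : Set E) :=
    AddSubgroup.isClosed_of_discrete (H := Λ.toAddSubgroup)
  set S : Set E := (Metric.closedBall 0 ‖x₀‖ ∩ (Λ : Set E)) \ {0} with hS
  have hSfin : S.Finite :=
    (Metric.finite_isBounded_inter_isClosed DiscreteTopology.isDiscrete Metric.isBounded_closedBall hclosed).subset
      Set.diff_subset
  have hx₀S : x₀ ∈ S := ⟨⟨mem_closedBall_zero_iff.mpr le_rfl, hx₀⟩, hx₀0⟩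
  obtain ⟨v, hvS, hvmin⟩ := Set.exists_min_image S norm hSfin ⟨x₀, hx₀S⟩
  set lam := ‖v‖ with hlam
  have hlam0 : 0 < lam := norm_pos_iff.mpr hvS.2
  have hmin : ∀ u ∈ Λ, u ≠ 0 → lam ≤ ‖u‖ := by
    intro u hu hu0
    by_cases h : ‖u‖ ≤ ‖x₀‖
    · exact hvmin u ⟨⟨mem_closedBall_zero_iff.mpr h, hu⟩, hu0⟩
    · exact le_trans (hvmin x₀ hx₀S) (le_of_not_ge h)
  have hTfin : (Metric.closedBall (0:E) (2*lam) ∩ (Λ : Set E)).Finite :=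
    Metric.finite_isBounded_inter_isClosed DiscreteTopology.isDiscrete Metric.isBounded_closedBall hclosed
  set F : Set E := {u ∈ Metric.closedBall (0:E) (2*lam) ∩ (Λ : Set E) | lam < ‖u‖} with hF
  by_cases hFne : F.Nonempty
  · obtain ⟨u₀, hu₀F, hu₀min⟩ :=
      Set.exists_min_image F norm (hTfin.subset (Set.sep_subset _ _)) hFne
    have h2lam : ‖u₀‖ ≤ 2*lam := mem_closedBall_zero_iff.mp hu₀F.1.1
    have hlamu₀ : lam < ‖u₀‖ := hu₀F.2
    refine ⟨lam, (lam + ‖u₀‖)/2, hlam0, by linarith, ⟨v, hvS.1.2, hvS.2, rfl⟩, hmin, ?_⟩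
    intro u hu hu0 hult
    by_contra hne
    have h1 : lam < ‖u‖ := lt_of_le_of_ne (hmin u hu hu0) (Ne.symm hne)
    have h2 : ‖u‖ ≤ 2*lam := by linarith
    have huF : u ∈ F := ⟨⟨mem_closedBall_zero_iff.mpr h2, hu⟩, h1⟩
    have := hu₀min u huF
    linarith
  · refine ⟨lam, 2*lam, hlam0, by linarith, ⟨v, hvS.1.2, hvS.2, rfl⟩, hmin, ?_⟩
    intro u hu hu0 hult
    by_contra hne
    exact hFne ⟨u, ⟨mem_closedBall_zero_iff.mpr hult.le, hu⟩,
      lt_of_le_of_ne (hmin u hu hu0) (Ne.symm hne)⟩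

/-- Martinet, Lemma 3.4.2: for `g` near the identity, the minimal nonzero vectors of
`gΛ₀` are images under `g` of minimal nonzero vectors of `Λ₀`. -/
theorem minimal_vectors_stable (g₀ : Matrix (Fin d) (Fin d) ℝ) (h₀ : g₀.det ≠ 0) :
    ∃ V ∈ nhds (1 : Matrix (Fin d) (Fin d) ℝ), ∀ g ∈ V, g.det ≠ 0 →
      ∀ w ∈ latticePts (g * g₀), w ≠ 0 →
        (∀ u ∈ latticePts (g * g₀), u ≠ 0 → eNorm w ≤ eNorm u) →
        ∃ v ∈ latticePts g₀, v ≠ 0 ∧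
          (∀ u ∈ latticePts g₀, u ≠ 0 → eNorm v ≤ eNorm u) ∧ w = g.mulVec v := by
  classical
  by_cases hnz : ∃ v ∈ latticePts g₀, v ≠ 0
  swap
  · refine ⟨Set.univ, Filter.univ_mem, ?_⟩
    rintro g - hg w ⟨m, rfl⟩ hw0 -
    push_neg at hnz
    exact absurd (by
      rw [← Matrix.mulVec_mulVec,
        hnz (g₀.mulVec fun i => (m i : ℝ)) ⟨m, rfl⟩, Matrix.mulVec_zero]) hw0
  obtain ⟨v₀, hv₀lat, hv₀0⟩ := hnz
  have hdet : IsUnit g₀.det := isUnit_iff_ne_zero.mpr h₀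
  haveI : Invertible g₀ := g₀.invertibleOfIsUnitDet hdet
  set φ : (Fin d → ℝ) ≃ₗ[ℝ] EuclideanSpace ℝ (Fin d) :=
    (WithLp.linearEquiv 2 ℝ (Fin d → ℝ)).symm with hφdef
  have heNorm : ∀ v : Fin d → ℝ, eNorm v = ‖φ v‖ := by
    intro v
    rw [EuclideanSpace.norm_eq]
    unfold eNorm
    congr 1
    refine Finset.sum_congr rfl fun i _ => ?_
    rw [Real.norm_eq_abs, sq_abs]
    rfl
  set e : (Fin d → ℝ) ≃ₗ[ℝ] EuclideanSpace ℝ (Fin d) :=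
    (g₀.toLinearEquiv' inferInstance).trans φ with hedef
  have heapp : ∀ x : Fin d → ℝ, e x = φ (g₀.mulVec x) := by
    intro x
    show φ (Matrix.toLin' g₀ x) = φ (g₀.mulVec x)
    rw [Matrix.toLin'_apply]
  set b : Module.Basis (Fin d) ℝ (EuclideanSpace ℝ (Fin d)) := (Pi.basisFun ℝ (Fin d)).map e with hbdef
  set Λ : Submodule ℤ (EuclideanSpace ℝ (Fin d)) := span ℤ (Set.range b) with hΛdef
  haveI : DiscreteTopology Λ := inferInstanceAs (DiscreteTopology (span ℤ (Set.range b)))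
  have key : ∀ m : Fin d → ℤ, φ (g₀.mulVec fun i => (m i : ℝ)) = ∑ i, m i • b i := by
    intro m
    have h1 : (fun i => (m i : ℝ)) = ∑ i, m i • Pi.single i (1:ℝ) := by
      funext j
      simp [Finset.sum_apply, Pi.single_apply, zsmul_eq_mul]
    rw [← heapp, h1, map_sum]
    refine Finset.sum_congr rfl fun i _ => ?_
    rw [map_zsmul, hbdef, Module.Basis.map_apply, Pi.basisFun_apply]
  have hmem : ∀ v : Fin d → ℝ, v ∈ latticePts g₀ ↔ φ v ∈ Λ := by
    intro v
    constructor
    · rintro ⟨m, rfl⟩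
      rw [key m]
      exact sum_mem fun i _ => zsmul_mem (subset_span (Set.mem_range_self i)) _
    · intro h
      obtain ⟨c, hc⟩ := (mem_span_range_iff_exists_fun ℤ).mp h
      exact ⟨c, φ.injective (by rw [key c, hc])⟩
  -- minimal norm and gap
  obtain ⟨lam, c, hlam0, hlamc, ⟨vm, hvmΛ, hvm0, hvmnorm⟩, hmin, hgap⟩ :=
    exists_min_and_gap Λ (φ v₀) ((hmem v₀).mp hv₀lat)
      (by simpa using φ.map_ne_zero_iff.mpr hv₀0)
  -- choose ε
  set ε : ℝ := (c - lam) / (2*(c + lam)) with hεdef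
  have hε0 : 0 < ε := div_pos (by linarith) (by linarith)
  have hε1 : ε < 1 := by
    rw [hεdef, div_lt_one (by linarith)]; linarith
  have hkey : (1+ε)*lam < (1-ε)*c := by
    have hne : (2*(c + lam)) ≠ 0 := ne_of_gt (by linarith)
    have h : ε * (2*(c + lam)) = c - lam := div_mul_cancel₀ _ hne
    nlinarith [h]
  -- the linear map from matrices to operators
  set L : Matrix (Fin d) (Fin d) ℝ ≃ₗ[ℝ]
      (EuclideanSpace ℝ (Fin d) →L[ℝ] EuclideanSpace ℝ (Fin d)) :=
    Matrix.toEuclideanLin.trans LinearMap.toContinuousLinearMap with hLdef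
  have hLapp : ∀ (g : Matrix (Fin d) (Fin d) ℝ) (x : Fin d → ℝ),
      L g (φ x) = φ (g.mulVec x) := by
    intro g x
    show (Matrix.toEuclideanLin g) (φ x) = φ (g.mulVec x)
    rw [Matrix.toEuclideanLin_apply]
    rfl
  have hLcont : Continuous fun g : Matrix (Fin d) (Fin d) ℝ => L g :=
    LinearMap.continuous_of_finiteDimensional L.toLinearMap
  set V : Set (Matrix (Fin d) (Fin d) ℝ) :=
    (fun g => ‖L (g - 1)‖) ⁻¹' Set.Iio ε with hVdef
  have hVopen : IsOpen V :=
    (continuous_norm.comp (hLcont.comp (continuous_id.sub continuous_const))).isOpen_preimage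
      _ isOpen_Iio
  have h1V : (1 : Matrix (Fin d) (Fin d) ℝ) ∈ V := by
    show ‖L (1 - 1)‖ < ε
    rw [sub_self, map_zero, norm_zero]
    exact hε0
  refine ⟨V, hVopen.mem_nhds h1V, ?_⟩
  intro g hgV hgdet w hwlat hw0 hwmin
  have hgsmall : ‖L (g - 1)‖ < ε := hgV
  have hL1 : ∀ x : EuclideanSpace ℝ (Fin d), L (1 : Matrix (Fin d) (Fin d) ℝ) x = x := by
    intro x
    show (Matrix.toEuclideanLin (1 : Matrix (Fin d) (Fin d) ℝ)) x = x
    rw [Matrix.toEuclideanLin_apply, Matrix.one_mulVec, WithLp.toLp_ofLp]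
  have hdiff : ∀ x : EuclideanSpace ℝ (Fin d), ‖L g x - x‖ ≤ ε * ‖x‖ := by
    intro x
    have h : L g x - x = L (g - 1) x := by
      rw [map_sub, ContinuousLinearMap.sub_apply, hL1]
    rw [h]
    exact le_trans ((L (g-1)).le_opNorm x)
      (mul_le_mul_of_nonneg_right hgsmall.le (norm_nonneg x))
  have hub : ∀ x : EuclideanSpace ℝ (Fin d), ‖L g x‖ ≤ (1+ε) * ‖x‖ := by
    intro x
    have := norm_add_le x (L g x - x)
    have h2 := hdiff x
    have h3 : x + (L g x - x) = L g x := by abel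
    rw [h3] at this
    nlinarith [norm_nonneg x]
  have hlb : ∀ x : EuclideanSpace ℝ (Fin d), (1-ε) * ‖x‖ ≤ ‖L g x‖ := by
    intro x
    have h1 := norm_sub_norm_le x (L g x)
    have h2 : ‖x - L g x‖ = ‖L g x - x‖ := norm_sub_rev _ _
    have h3 := hdiff x
    nlinarith [norm_nonneg x]
  -- decompose w
  obtain ⟨m, rfl⟩ := hwlat
  set v : Fin d → ℝ := g₀.mulVec fun i => (m i : ℝ) with hvdef
  have hveq : (g * g₀).mulVec (fun i => (m i : ℝ)) = g.mulVec v := by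
    rw [hvdef, Matrix.mulVec_mulVec]
  have hv0 : v ≠ 0 := by
    intro h
    apply hw0
    rw [hveq, h, Matrix.mulVec_zero]
  have hvlat : v ∈ latticePts g₀ := ⟨m, rfl⟩
  have hvΛ : φ v ∈ Λ := (hmem v).mp hvlat
  have hφv0 : φ v ≠ 0 := φ.map_ne_zero_iff.mpr hv0
  -- the comparison vector
  have hvmlat : φ.symm vm ∈ latticePts g₀ := (hmem _).mpr (by rwa [φ.apply_symm_apply])
  obtain ⟨m', hm'⟩ := hvmlat
  have hulat : g.mulVec (φ.symm vm) ∈ latticePts (g * g₀) :=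
    ⟨m', by rw [hm', Matrix.mulVec_mulVec]⟩
  have hginj : ∀ y : Fin d → ℝ, g.mulVec y = 0 → y = 0 := by
    intro y hy
    have := congrArg (g⁻¹.mulVec) hy
    rwa [Matrix.mulVec_mulVec, Matrix.nonsing_inv_mul g (isUnit_iff_ne_zero.mpr hgdet), Matrix.one_mulVec,
      Matrix.mulVec_zero] at this
  have hu0 : g.mulVec (φ.symm vm) ≠ 0 := by
    intro h
    apply hvm0
    have := hginj _ h
    have h2 : vm = φ (φ.symm vm) := (φ.apply_symm_apply vm).symm
    rw [h2, this, map_zero]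
  -- norm computations
  have hwnorm : eNorm ((g * g₀).mulVec fun i => (m i : ℝ)) = ‖L g (φ v)‖ := by
    rw [hveq, heNorm, hLapp]
  have hunorm : eNorm (g.mulVec (φ.symm vm)) = ‖L g vm‖ := by
    rw [heNorm, ← hLapp g (φ.symm vm), φ.apply_symm_apply]
  have hbound1 : ‖L g (φ v)‖ ≤ (1+ε) * lam := by
    have := hwmin _ hulat hu0
    rw [hwnorm, hunorm] at this
    calc ‖L g (φ v)‖ ≤ ‖L g vm‖ := this
      _ ≤ (1+ε) * ‖vm‖ := hub vm
      _ = (1+ε) * lam := by rw [hvmnorm]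
  have hbound2 : (1-ε) * ‖φ v‖ ≤ ‖L g (φ v)‖ := hlb (φ v)
  have hφvlt : ‖φ v‖ < c := by nlinarith
  have hφvnorm : ‖φ v‖ = lam := hgap (φ v) hvΛ hφv0 hφvlt
  refine ⟨v, hvlat, hv0, ?_, hveq⟩
  intro u hu hu0
  rw [heNorm, heNorm, hφvnorm]
  exact hmin (φ u) ((hmem u).mp hu) (φ.map_ne_zero_iff.mpr hu0)
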